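/- arXiv:1202.3094 — 5 statements merged into one kernel-verified Lean document; each statement's English description precedes it below -/
import Mathlib

section
/- Let a : [-π,π] → ℝ be a C¹ function with Fourier coefficients â(k), k ∈ ℤ, and assume that ∑_{k∈ℤ} |â(k) − â(k−1)| ≤ K. Then for every x ∈ [−π,π] one has |a(x)| ≤ (π K)/(2|x|). -/
/-!
With `z = e^{ix}` we have `a x = ∑ â(k) z^k`, and multiplying by `1 - z` replaces the
coefficients by their first differences (summation by parts), so `‖1 - z‖ ‖a x‖ ≤ K`.
Since `‖1 - e^{ix}‖ = 2 |sin (x/2)| ≥ 2 |x| / π` on `[-π, π]`, the bound follows.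
-/

open Complex Real

section Shift

variable {𝕜 : Type*} [NormedField 𝕜]

lemma mul_tsum_mul_zpow {z : 𝕜} (hz : z ≠ 0) (c : ℤ → 𝕜) :
    z * ∑' k : ℤ, c k * z ^ k = ∑' k : ℤ, c (k - 1) * z ^ k := by
  rw [← tsum_mul_left, ← (Equiv.addRight (1 : ℤ)).tsum_eq (fun k => c (k - 1) * z ^ k)]
  refine tsum_congr fun k => ?_
  rw [Equiv.coe_addRight, add_sub_cancel_right, zpow_add_one₀ hz]
  ring

lemma norm_one_sub_mul_tsum_mul_zpow_le [CompleteSpace 𝕜] {z : 𝕜} (hz : ‖z‖ = 1) (c : ℤ → 𝕜)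
    (hc : Summable fun k : ℤ => ‖c k - c (k - 1)‖) :
    ‖(1 - z) * ∑' k : ℤ, c k * z ^ k‖ ≤ ∑' k : ℤ, ‖c k - c (k - 1)‖ := by
  have hz0 : z ≠ 0 := norm_ne_zero_iff.mp (by rw [hz]; exact one_ne_zero)
  have hnorm : ∀ k : ℤ, ‖(c k - c (k - 1)) * z ^ k‖ = ‖c k - c (k - 1)‖ := fun k => by
    rw [norm_mul, norm_zpow, hz, one_zpow, mul_one]
  have hdiff_norm : Summable fun k : ℤ => ‖(c k - c (k - 1)) * z ^ k‖ :=
    hc.congr fun k => (hnorm k).symm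
  have hdiff := hdiff_norm.of_norm
  rw [sub_mul, one_mul, mul_tsum_mul_zpow hz0]
  by_cases hS : Summable fun k : ℤ => c k * z ^ k
  · have hS' : Summable fun k : ℤ => c (k - 1) * z ^ k :=
      (hS.sub hdiff).congr fun k => by ring
    rw [← hS.tsum_sub hS']
    calc ‖∑' k : ℤ, (c k * z ^ k - c (k - 1) * z ^ k)‖
        = ‖∑' k : ℤ, (c k - c (k - 1)) * z ^ k‖ := by simp only [sub_mul]
      _ ≤ ∑' k : ℤ, ‖(c k - c (k - 1)) * z ^ k‖ := norm_tsum_le_tsum_norm hdiff_norm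
      _ = ∑' k : ℤ, ‖c k - c (k - 1)‖ := tsum_congr hnorm
  · -- both series diverge, so both `tsum`s take the junk value `0`
    have hS' : ¬Summable fun k : ℤ => c (k - 1) * z ^ k := fun h =>
      hS ((h.add hdiff).congr fun k => by ring)
    rw [tsum_eq_zero_of_not_summable hS, tsum_eq_zero_of_not_summable hS', sub_zero, norm_zero]
    exact tsum_nonneg fun k => norm_nonneg _

end Shift

lemma two_mul_abs_div_pi_le_norm_one_sub_exp {x : ℝ} (hx : |x| ≤ π) :
    2 * |x| / π ≤ ‖1 - exp (I * x)‖ := by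
  have hsin : 2 / π * |x / 2| ≤ |Real.sin (x / 2)| :=
    mul_abs_le_abs_sin (by rw [abs_div, abs_two]; linarith)
  rw [norm_sub_rev, norm_exp_I_mul_ofReal_sub_one, norm_mul, Real.norm_eq_abs,
    Real.norm_eq_abs, abs_two]
  rw [abs_div, abs_two] at hsin
  calc 2 * |x| / π = 2 * (2 / π * (|x| / 2)) := by ring
    _ ≤ 2 * |Real.sin (x / 2)| := by gcongr

theorem stmt0_general (a : ℝ → ℂ) (ahat : ℤ → ℂ) (K : ℝ)
    (hrep : ∀ x : ℝ, a x = ∑' k : ℤ, ahat k * Complex.exp (Complex.I * (k : ℂ) * (x : ℂ)))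
    (hsum : Summable fun k : ℤ => ‖ahat k - ahat (k - 1)‖)
    (hK : (∑' k : ℤ, ‖ahat k - ahat (k - 1)‖) ≤ K) :
    ∀ x ∈ Set.Icc (-Real.pi) Real.pi, x ≠ 0 →
      ‖a x‖ ≤ Real.pi * K / (2 * |x|) := by
  intro x hx hx0
  set z := exp (I * x)
  have hz : ‖z‖ = 1 := norm_exp_I_mul_ofReal x
  have hax : a x = ∑' k : ℤ, ahat k * z ^ k := by
    rw [hrep x]
    exact tsum_congr fun k => by rw [← exp_int_mul, mul_left_comm, mul_assoc]
  have hupper : ‖1 - z‖ * ‖a x‖ ≤ K := by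
    rw [← norm_mul, hax]
    exact (norm_one_sub_mul_tsum_mul_zpow_le hz ahat hsum).trans hK
  have hlower := two_mul_abs_div_pi_le_norm_one_sub_exp (abs_le.mpr hx)
  have hxpos : 0 < |x| := abs_pos.mpr hx0
  rw [le_div_iff₀ (by positivity)]
  calc ‖a x‖ * (2 * |x|) = 2 * |x| / π * ‖a x‖ * π := by field_simp
    _ ≤ ‖1 - z‖ * ‖a x‖ * π := by gcongr
    _ ≤ K * π := by gcongr
    _ = π * K := mul_comm _ _

theorem stmt0 (a : ℝ → ℂ) (ahat : ℤ → ℂ) (K : ℝ)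
    (ha : ContDiff ℝ 1 a)
    (hrep : ∀ x : ℝ, a x = ∑' k : ℤ, ahat k * Complex.exp (Complex.I * (k : ℂ) * (x : ℂ)))
    (hsum : Summable fun k : ℤ => ‖ahat k - ahat (k - 1)‖)
    (hK : (∑' k : ℤ, ‖ahat k - ahat (k - 1)‖) ≤ K) :
    ∀ x ∈ Set.Icc (-Real.pi) Real.pi, x ≠ 0 →
      ‖a x‖ ≤ Real.pi * K / (2 * |x|) :=
  stmt0_general a ahat K hrep hsum hK
end

section
/- Let g₀₀, g₀₁, g₁₀, g₁₁ be non-negative real numbers and let m = min g_{ij}. Then |e^{−g₀₀} − e^{−g₀₁} − e^{−g₁₀} + e^{−g₁₁}| ≤ e^{−m} [ |g₀₀ − g₀₁ − g₁₀ + g₁₁| + (|g₀₀ − g₀₁| + |g₁₀ − g₁₁|)(|g₀₀ − g₁₀| + |g₀₁ − g₁₁|) ]. -/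
open Real

private lemma exp_diff_le' {m x y : ℝ} (hx : m ≤ x) (hy : m ≤ y) :
    |Real.exp (-x) - Real.exp (-y)| ≤ Real.exp (-m) * |x - y| := by
  wlog h : x ≤ y generalizing x y
  · rw [abs_sub_comm, abs_sub_comm x y]; exact this hy hx (le_of_not_ge h)
  have h1 : Real.exp (-y) ≤ Real.exp (-x) := Real.exp_le_exp.2 (by linarith)
  rw [abs_of_nonneg (by linarith), abs_sub_comm,
    abs_of_nonneg (by linarith : (0:ℝ) ≤ y - x)]
  have key : Real.exp (-x) - Real.exp (-y)
      = Real.exp (-x) * (1 - Real.exp (-(y - x))) := by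
    rw [mul_sub, mul_one, ← Real.exp_add]; ring_nf
  rw [key]
  have h2 : 1 - Real.exp (-(y - x)) ≤ y - x := by
    have := Real.add_one_le_exp (-(y - x)); linarith
  have h3 : Real.exp (-x) ≤ Real.exp (-m) := Real.exp_le_exp.2 (by linarith)
  have h4 : 0 ≤ 1 - Real.exp (-(y - x)) := by
    have : Real.exp (-(y - x)) ≤ 1 := Real.exp_le_one_iff.2 (by linarith)
    linarith
  exact mul_le_mul h3 h2 h4 (le_of_lt (Real.exp_pos _))

private lemma aux_min (A B C D : ℝ) (hB : A ≤ B) (hC : A ≤ C) (hD : A ≤ D) :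
    |Real.exp (-A) - Real.exp (-B) - Real.exp (-C) + Real.exp (-D)| ≤
      Real.exp (-A) * (|A - B - C + D| + |A - B| * |A - C|) := by
  set S := B + C - A with hS
  have hSA : A ≤ S := by simp only [hS]; linarith
  have e1 : Real.exp (-A) * Real.exp (A - B) = Real.exp (-B) := by
    rw [← Real.exp_add]; ring_nf
  have e2 : Real.exp (-A) * Real.exp (A - C) = Real.exp (-C) := by
    rw [← Real.exp_add]; ring_nf
  have e3 : Real.exp (-A) * Real.exp (A - B) * Real.exp (A - C) = Real.exp (-S) := by
    rw [mul_assoc, ← Real.exp_add, ← Real.exp_add]; congr 1; rw [hS]; ring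
  have key : Real.exp (-A) - Real.exp (-B) - Real.exp (-C) + Real.exp (-S)
      = Real.exp (-A) * (1 - Real.exp (A - B)) * (1 - Real.exp (A - C)) := by
    linear_combination e1 + e2 - e3
  have f1 : 0 ≤ 1 - Real.exp (A - B) := by
    have : Real.exp (A - B) ≤ 1 := Real.exp_le_one_iff.2 (by linarith); linarith
  have f2 : 0 ≤ 1 - Real.exp (A - C) := by
    have : Real.exp (A - C) ≤ 1 := Real.exp_le_one_iff.2 (by linarith); linarith
  have g1 : 1 - Real.exp (A - B) ≤ B - A := by
    have := Real.add_one_le_exp (A - B); linarith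
  have g2 : 1 - Real.exp (A - C) ≤ C - A := by
    have := Real.add_one_le_exp (A - C); linarith
  have term1 : |Real.exp (-A) - Real.exp (-B) - Real.exp (-C) + Real.exp (-S)|
      ≤ Real.exp (-A) * |A - B| * |A - C| := by
    rw [key, abs_of_nonneg (by positivity)]
    rw [abs_sub_comm A B, abs_of_nonneg (by linarith), abs_sub_comm A C,
      abs_of_nonneg (by linarith)]
    have hmul : (1 - Real.exp (A - B)) * (1 - Real.exp (A - C)) ≤ (B - A) * (C - A) :=
      mul_le_mul g1 g2 f2 (by linarith)
    calc Real.exp (-A) * (1 - Real.exp (A - B)) * (1 - Real.exp (A - C))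
        = Real.exp (-A) * ((1 - Real.exp (A - B)) * (1 - Real.exp (A - C))) := by ring
      _ ≤ Real.exp (-A) * ((B - A) * (C - A)) :=
          mul_le_mul_of_nonneg_left hmul (Real.exp_pos _).le
      _ = Real.exp (-A) * (B - A) * (C - A) := by ring
  have term2 : |Real.exp (-D) - Real.exp (-S)| ≤ Real.exp (-A) * |A - B - C + D| := by
    have h := exp_diff_le' hD hSA
    rwa [show D - S = A - B - C + D from by rw [hS]; ring] at h
  calc |Real.exp (-A) - Real.exp (-B) - Real.exp (-C) + Real.exp (-D)|
      = |(Real.exp (-A) - Real.exp (-B) - Real.exp (-C) + Real.exp (-S))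
          + (Real.exp (-D) - Real.exp (-S))| := by ring_nf
    _ ≤ |Real.exp (-A) - Real.exp (-B) - Real.exp (-C) + Real.exp (-S)|
          + |Real.exp (-D) - Real.exp (-S)| := abs_add_le _ _
    _ ≤ Real.exp (-A) * |A - B| * |A - C| + Real.exp (-A) * |A - B - C + D| := by
        linarith
    _ = Real.exp (-A) * (|A - B - C + D| + |A - B| * |A - C|) := by ring

/- Statement 1: second-order difference estimate for the exponential. -/
theorem stmt1 (g00 g01 g10 g11 : ℝ)
    (h00 : 0 ≤ g00) (h01 : 0 ≤ g01) (h10 : 0 ≤ g10) (h11 : 0 ≤ g11) :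
    |Real.exp (-g00) - Real.exp (-g01) - Real.exp (-g10) + Real.exp (-g11)| ≤
      Real.exp (-(min (min g00 g01) (min g10 g11))) *
        (|g00 - g01 - g10 + g11| +
          (|g00 - g01| + |g10 - g11|) * (|g00 - g10| + |g01 - g11|)) := by
  set m := min (min g00 g01) (min g10 g11) with hm
  have hm00 : m ≤ g00 := le_trans (min_le_left _ _) (min_le_left _ _)
  have hm01 : m ≤ g01 := le_trans (min_le_left _ _) (min_le_right _ _)
  have hm10 : m ≤ g10 := le_trans (min_le_right _ _) (min_le_left _ _)
  have hm11 : m ≤ g11 := le_trans (min_le_right _ _) (min_le_right _ _)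
  have hcases : m = g00 ∨ m = g01 ∨ m = g10 ∨ m = g11 := by
    rcases min_cases (min g00 g01) (min g10 g11) with ⟨h3, _⟩ | ⟨h3, _⟩
    · rcases min_cases g00 g01 with ⟨h1, _⟩ | ⟨h1, _⟩
      · exact Or.inl (by rw [hm, h3, h1])
      · exact Or.inr (Or.inl (by rw [hm, h3, h1]))
    · rcases min_cases g10 g11 with ⟨h2, _⟩ | ⟨h2, _⟩
      · exact Or.inr (Or.inr (Or.inl (by rw [hm, h3, h2])))
      · exact Or.inr (Or.inr (Or.inr (by rw [hm, h3, h2])))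
  have exnn := abs_nonneg (g00 - g01)
  have exnn2 := abs_nonneg (g10 - g11)
  have exnn3 := abs_nonneg (g00 - g10)
  have exnn4 := abs_nonneg (g01 - g11)
  rcases hcases with h | h | h | h
  · rw [h]
    have epos := (Real.exp_pos (-g00)).le
    have key := aux_min g00 g01 g10 g11 (h ▸ hm01) (h ▸ hm10) (h ▸ hm11)
    nlinarith [mul_nonneg (mul_nonneg epos exnn2) exnn3,
      mul_nonneg (mul_nonneg epos exnn) exnn4,
      mul_nonneg (mul_nonneg epos exnn2) exnn4]
  · rw [h]
    have epos := (Real.exp_pos (-g01)).le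
    have key := aux_min g01 g00 g11 g10 (h ▸ hm00) (h ▸ hm11) (h ▸ hm10)
    have r1 : |Real.exp (-g01) - Real.exp (-g00) - Real.exp (-g11) + Real.exp (-g10)|
        = |Real.exp (-g00) - Real.exp (-g01) - Real.exp (-g10) + Real.exp (-g11)| := by
      rw [← abs_neg]; congr 1; ring
    have r2 : |g01 - g00 - g11 + g10| = |g00 - g01 - g10 + g11| := by
      rw [← abs_neg]; congr 1; ring
    have r3 : |g01 - g00| = |g00 - g01| := abs_sub_comm _ _
    rw [r1, r2, r3] at key
    nlinarith [mul_nonneg (mul_nonneg epos exnn) exnn3,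
      mul_nonneg (mul_nonneg epos exnn2) exnn3,
      mul_nonneg (mul_nonneg epos exnn2) exnn4]
  · rw [h]
    have epos := (Real.exp_pos (-g10)).le
    have key := aux_min g10 g11 g00 g01 (h ▸ hm11) (h ▸ hm00) (h ▸ hm01)
    have r1 : |Real.exp (-g10) - Real.exp (-g11) - Real.exp (-g00) + Real.exp (-g01)|
        = |Real.exp (-g00) - Real.exp (-g01) - Real.exp (-g10) + Real.exp (-g11)| := by
      rw [← abs_neg]; congr 1; ring
    have r2 : |g10 - g11 - g00 + g01| = |g00 - g01 - g10 + g11| := by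
      rw [← abs_neg]; congr 1; ring
    have r3 : |g10 - g00| = |g00 - g10| := abs_sub_comm _ _
    rw [r1, r2, r3] at key
    nlinarith [mul_nonneg (mul_nonneg epos exnn) exnn3,
      mul_nonneg (mul_nonneg epos exnn) exnn4,
      mul_nonneg (mul_nonneg epos exnn2) exnn4]
  · rw [h]
    have epos := (Real.exp_pos (-g11)).le
    have key := aux_min g11 g10 g01 g00 (h ▸ hm10) (h ▸ hm01) (h ▸ hm00)
    have r1 : |Real.exp (-g11) - Real.exp (-g10) - Real.exp (-g01) + Real.exp (-g00)|
        = |Real.exp (-g00) - Real.exp (-g01) - Real.exp (-g10) + Real.exp (-g11)| := by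
      congr 1; ring
    have r2 : |g11 - g10 - g01 + g00| = |g00 - g01 - g10 + g11| := by
      congr 1; ring
    have r3 : |g11 - g10| = |g10 - g11| := abs_sub_comm _ _
    have r4 : |g11 - g01| = |g01 - g11| := abs_sub_comm _ _
    rw [r1, r2, r3, r4] at key
    nlinarith [mul_nonneg (mul_nonneg epos exnn) exnn3,
      mul_nonneg (mul_nonneg epos exnn) exnn4,
      mul_nonneg (mul_nonneg epos exnn2) exnn3]
end

section
/- Let A_c(x) = e^{−x} − e^{−(1+c)x} for x ≥ 0 and c ∈ (0,1]. Then for all 0 ≤ x ≤ y one has |A_c(x) − A_c(y)| ≤ 2c |e^{−x/2} − e^{−y/2}|, and consequently sup_{x≥0} A_c(x) ≤ c·sup_{y≥0} y e^{−y} ≤ c. -/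
/-!
Writing `A_c(x) = e^{-x} - e^{-(1+c)x} = e^{-x}(1 - e^{-cx})`, one has
`A_c'(z) = e^{-z}((1+c)e^{-cz} - 1)`, and `|(1+c)e^{-cz} - 1| ≤ c·max(1, z) ≤ c·e^{z/2}`, so
`|A_c'(z)| ≤ c·e^{-z/2}`, the derivative of `-2c·e^{-z/2}`; comparing increments of `A_c` with
those of this majorant gives the Lipschitz-type bound. For the supremum,
`A_c(x) ≤ e^{-x}·cx ≤ c·e^{-1}`.
-/

open Real Set

theorem norm_sub_le_sub_of_norm_deriv_le {E : Type*} [NormedAddCommGroup E] [NormedSpace ℝ E]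
    {f f' : ℝ → E} {g g' : ℝ → ℝ} {a b : ℝ} (hab : a ≤ b)
    (hf : ∀ t ∈ Icc a b, HasDerivAt f (f' t) t) (hg : ∀ t, HasDerivAt g (g' t) t)
    (bound : ∀ t ∈ Ico a b, ‖f' t‖ ≤ g' t) : ‖f b - f a‖ ≤ g b - g a := by
  refine image_norm_le_of_norm_deriv_right_le_deriv_boundary (f := fun t => f t - f a)
    (B := fun t => g t - g a) ?_ (fun t ht => ?_) (by simp) (fun t => (hg t).sub_const _) bound
    ⟨hab, le_rfl⟩
  · exact HasDerivAt.continuousOn (fun t ht => (hf t ht).sub_const _)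
  · exact ((hf t (Ico_subset_Icc_self ht)).sub_const _).hasDerivWithinAt

theorem self_le_exp_half (z : ℝ) : z ≤ exp (z / 2) := by
  have h1 := add_one_le_exp (z / 2 - 1)
  have h2 := add_one_le_exp 1
  rw [exp_sub] at h1
  have h3 : 0 < exp (z / 2) := exp_pos _
  rw [le_div_iff₀ (exp_pos 1)] at h1
  nlinarith

noncomputable def expGap (c x : ℝ) : ℝ := exp (-x) - exp (-(1 + c) * x)

theorem exp_neg_one_add_mul (c x : ℝ) : exp (-(1 + c) * x) = exp (-x) * exp (-(c * x)) := by
  rw [← exp_add]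
  ring_nf

theorem expGap_eq_mul (c x : ℝ) : expGap c x = exp (-x) * (1 - exp (-(c * x))) := by
  rw [expGap, exp_neg_one_add_mul]
  ring

theorem hasDerivAt_expGap (c x : ℝ) :
    HasDerivAt (expGap c) (exp (-x) * ((1 + c) * exp (-(c * x)) - 1)) x := by
  refine ((hasDerivAt_neg x).exp.sub ((hasDerivAt_id' x).const_mul (-(1 + c))).exp).congr_deriv ?_
  rw [exp_neg_one_add_mul]
  ring

theorem abs_one_add_mul_exp_neg_sub_one_le {c z : ℝ} (hc : 0 ≤ c) (hz : 0 ≤ z) :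
    |(1 + c) * exp (-(c * z)) - 1| ≤ c * exp (z / 2) := by
  have hcz : 0 ≤ c * z := mul_nonneg hc hz
  have hle : exp (-(c * z)) ≤ 1 := exp_le_one_iff.mpr (by linarith)
  have hge : 1 - c * z ≤ exp (-(c * z)) := by linarith [add_one_le_exp (-(c * z))]
  have hz' : z ≤ exp (z / 2) := self_le_exp_half z
  have h1 : 1 ≤ exp (z / 2) := one_le_exp_iff.mpr (by linarith)
  rw [abs_le]
  constructor <;> nlinarith [exp_pos (-(c * z))]

theorem abs_deriv_expGap_le {c z : ℝ} (hc : 0 ≤ c) (hz : 0 ≤ z) :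
    |exp (-z) * ((1 + c) * exp (-(c * z)) - 1)| ≤ c * exp (-z / 2) :=
  calc |exp (-z) * ((1 + c) * exp (-(c * z)) - 1)|
      = exp (-z) * |(1 + c) * exp (-(c * z)) - 1| := by rw [abs_mul, abs_of_pos (exp_pos _)]
    _ ≤ exp (-z) * (c * exp (z / 2)) := by gcongr; exact abs_one_add_mul_exp_neg_sub_one_le hc hz
    _ = c * exp (-z / 2) := by rw [mul_left_comm, ← exp_add]; ring_nf

theorem expGap_le_mul_mul_exp_neg (c x : ℝ) : expGap c x ≤ c * (x * exp (-x)) :=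
  calc expGap c x = exp (-x) * (1 - exp (-(c * x))) := expGap_eq_mul c x
    _ ≤ exp (-x) * (c * x) := by gcongr; linarith [add_one_le_exp (-(c * x))]
    _ = c * (x * exp (-x)) := by ring

theorem hasDerivAt_neg_two_mul_exp_neg_half (c t : ℝ) :
    HasDerivAt (fun s => -2 * c * exp (-s / 2)) (c * exp (-t / 2)) t := by
  refine (((hasDerivAt_neg t).div_const 2).exp.const_mul (-2 * c)).congr_deriv ?_
  ring

theorem abs_expGap_sub_le {c x y : ℝ} (hc : 0 ≤ c) (hx : 0 ≤ x) (hxy : x ≤ y) :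
    |expGap c x - expGap c y| ≤ 2 * c * |exp (-x / 2) - exp (-y / 2)| := by
  have h := norm_sub_le_sub_of_norm_deriv_le hxy (fun t _ => hasDerivAt_expGap c t)
    (hasDerivAt_neg_two_mul_exp_neg_half c)
    (fun t ht => abs_deriv_expGap_le hc (hx.trans ht.1))
  have hmono : exp (-y / 2) ≤ exp (-x / 2) := exp_le_exp.mpr (by linarith)
  rw [Real.norm_eq_abs, abs_sub_comm] at h
  rw [abs_of_nonneg (sub_nonneg.mpr hmono)]
  linarith

theorem expGap_le {c : ℝ} (hc : 0 ≤ c) (x : ℝ) : expGap c x ≤ c :=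
  calc expGap c x ≤ c * (x * exp (-x)) := expGap_le_mul_mul_exp_neg c x
    _ ≤ c * 1 := by
      gcongr
      exact (mul_exp_neg_le_exp_neg_one x).trans (exp_le_one_iff.mpr (by norm_num))
    _ = c := mul_one c

theorem stmt9 (c : ℝ) (hc : c ∈ Set.Ioc (0 : ℝ) 1) :
    (∀ x y : ℝ, 0 ≤ x → x ≤ y →
      |(Real.exp (-x) - Real.exp (-(1 + c) * x)) -
        (Real.exp (-y) - Real.exp (-(1 + c) * y))| ≤
        2 * c * |Real.exp (-x / 2) - Real.exp (-y / 2)|) ∧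
    (∀ x : ℝ, 0 ≤ x → Real.exp (-x) - Real.exp (-(1 + c) * x) ≤ c) :=
  ⟨fun _ _ hx hxy => abs_expGap_sub_le hc.1.le hx hxy, fun x _ => expGap_le hc.1.le x⟩
end

section
/- Let h : ℝ → ℝ be even and bounded, twice differentiable at the origin with h(0) = 1 and h′(0) = 0. Then for every α′ ∈ (0,1) there is a constant C with sup_{k∈ℤ} (1 − h(ε|k|))/(1 + |k|^{α′}) ≤ C ε^{α′} for all ε ∈ (0,1]. -/
/- Statement 12: if `h` is even, bounded, differentiable near the origin and twice
differentiable at the origin, with `h 0 = 1` and `h' 0 = 0`, then for every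
`α' ∈ (0,1)` there is `C > 0` such that
`(1 - h(ε|k|)) / (1 + |k|^{α'}) ≤ C ε^{α'}` for all `ε ∈ (0,1]` and all `k ∈ ℤ`. -/
theorem stmt12 (h : ℝ → ℝ) (heven : ∀ x, h (-x) = h x)
    (hbd : ∃ M : ℝ, ∀ x, |h x| ≤ M)
    (hdiff : ∀ᶠ x in nhds (0 : ℝ), DifferentiableAt ℝ h x)
    (hdiff2 : DifferentiableAt ℝ (deriv h) 0)
    (h0 : h 0 = 1) (h0' : deriv h 0 = 0) :
    ∀ α' : ℝ, α' ∈ Set.Ioo (0 : ℝ) 1 →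
      ∃ C : ℝ, 0 < C ∧ ∀ ε : ℝ, ε ∈ Set.Ioc (0 : ℝ) 1 → ∀ k : ℤ,
        (1 - h (ε * |(k : ℝ)|)) / (1 + |(k : ℝ)| ^ α') ≤ C * ε ^ α' := by
  intro α' hα'
  obtain ⟨hα0, hα1⟩ := hα'
  obtain ⟨M, hM⟩ := hbd
  have hM1 : (1:ℝ) ≤ M := by have := hM 0; rwa [h0, abs_one] at this
  have hd0 : DifferentiableAt ℝ h 0 := hdiff.self_of_nhds
  have hder : HasDerivAt h 0 0 := by simpa [h0'] using hd0.hasDerivAt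
  have hlo := (hasDerivAt_iff_isLittleO.mp hder).def one_pos
  simp only [h0, smul_zero, sub_zero, one_mul, Real.norm_eq_abs] at hlo
  obtain ⟨δ, hδpos, hδ⟩ := Metric.eventually_nhds_iff.mp hlo
  set δ' : ℝ := min δ 1 with hδ'def
  have hδ'pos : 0 < δ' := lt_min hδpos one_pos
  set d : ℝ := δ' ^ α' with hddef
  have hdpos : 0 < d := Real.rpow_pos_of_pos hδ'pos α'
  refine ⟨max 1 ((1 + M) / d), lt_of_lt_of_le one_pos (le_max_left _ _), ?_⟩
  set C : ℝ := max 1 ((1 + M) / d) with hCdef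
  have hC1 : (1:ℝ) ≤ C := le_max_left _ _
  have hC0 : 0 ≤ C := le_trans zero_le_one hC1
  -- key pointwise estimate
  have key : ∀ x : ℝ, 0 ≤ x → 1 - h x ≤ C * x ^ α' := by
    intro x hx
    rcases eq_or_lt_of_le hx with rfl | hxpos
    · simp [Real.zero_rpow (ne_of_gt hα0), h0]
    rcases lt_or_ge x δ' with hxs | hxl
    · -- small x
      have hx1 : x ≤ 1 := le_of_lt (lt_of_lt_of_le hxs (min_le_right _ _))
      have hxd : dist x 0 < δ := by
        rw [Real.dist_eq, sub_zero, abs_of_pos hxpos]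
        exact lt_of_lt_of_le hxs (min_le_left _ _)
      have h1 : 1 - h x ≤ x := by
        have hb := hδ hxd
        rw [abs_of_pos hxpos] at hb
        linarith [neg_abs_le (h x - 1)]
      have h2 : x ≤ x ^ α' := by
        calc x = x ^ (1:ℝ) := (Real.rpow_one x).symm
        _ ≤ x ^ α' := Real.rpow_le_rpow_of_exponent_ge hxpos hx1 (le_of_lt hα1)
      calc 1 - h x ≤ x := h1
      _ ≤ x ^ α' := h2
      _ = 1 * x ^ α' := (one_mul _).symm
      _ ≤ C * x ^ α' := by
        apply mul_le_mul_of_nonneg_right hC1 (Real.rpow_nonneg hx _)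
    · -- large x
      have h1 : 1 - h x ≤ 1 + M := by
        have := hM x
        have := neg_abs_le (h x)
        linarith
      have h2 : d ≤ x ^ α' := Real.rpow_le_rpow (le_of_lt hδ'pos) hxl (le_of_lt hα0)
      have h3 : (1 + M) / d * d ≤ (1 + M) / d * x ^ α' := by
        apply mul_le_mul_of_nonneg_left h2
        positivity
      rw [div_mul_cancel₀ _ (ne_of_gt hdpos)] at h3
      calc 1 - h x ≤ 1 + M := h1
      _ ≤ (1 + M) / d * x ^ α' := h3
      _ ≤ C * x ^ α' := by
        apply mul_le_mul_of_nonneg_right (le_max_right _ _) (Real.rpow_nonneg hx _)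
  intro ε hε k
  obtain ⟨hε0, hε1⟩ := hε
  have hk0 : (0:ℝ) ≤ |(k:ℝ)| := abs_nonneg _
  have hkpow : (0:ℝ) ≤ |(k:ℝ)| ^ α' := Real.rpow_nonneg hk0 _
  have hden : 0 < 1 + |(k:ℝ)| ^ α' := by linarith
  rw [div_le_iff₀ hden]
  have hx : (0:ℝ) ≤ ε * |(k:ℝ)| := mul_nonneg (le_of_lt hε0) hk0
  have hεpow : (0:ℝ) ≤ ε ^ α' := Real.rpow_nonneg (le_of_lt hε0) _
  calc 1 - h (ε * |(k:ℝ)|) ≤ C * (ε * |(k:ℝ)|) ^ α' := key _ hx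
  _ = C * (ε ^ α' * |(k:ℝ)| ^ α') := by
      rw [Real.mul_rpow (le_of_lt hε0) hk0]
  _ = C * ε ^ α' * |(k:ℝ)| ^ α' := by ring
  _ ≤ C * ε ^ α' * (1 + |(k:ℝ)| ^ α') := by
      apply mul_le_mul_of_nonneg_left (by linarith) (by positivity)
end

section
/- Let S(x) = sin(x/2)/x for x ≠ 0 (extended by S(0) = 1/2). Then there is a constant C such that for all real x, y with x² + y² > 0: |S(x) − S(y)| / |x² − y²| ≤ C min(1, 1/(x² + y²)) whenever |x| ≠ |y|. -/
/-- `S x = sin (x/2) / x`, extended by `S 0 = 1/2`. -/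
noncomputable def Sfun (x : ℝ) : ℝ := if x = 0 then 1 / 2 else Real.sin (x / 2) / x

lemma Sfun_integral (x : ℝ) : Sfun x = ∫ t in (0:ℝ)..(1/2), Real.cos (x * t) := by
  rcases eq_or_ne x 0 with h | h
  · simp [Sfun, h]
  · rw [intervalIntegral.integral_comp_mul_left Real.cos h]
    simp [Sfun, h, integral_cos, div_eq_inv_mul, mul_comm]

lemma cos_diff_bound (a b : ℝ) : |Real.cos a - Real.cos b| ≤ |a + b| * |a - b| / 2 := by
  rw [Real.cos_sub_cos, abs_mul, abs_mul]
  have h1 : |Real.sin ((a + b) / 2)| ≤ |a + b| / 2 := by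
    calc |Real.sin ((a + b) / 2)| ≤ |(a + b) / 2| := Real.abs_sin_le_abs
    _ = |a + b| / 2 := by rw [abs_div]; norm_num
  have h2 : |Real.sin ((a - b) / 2)| ≤ |a - b| / 2 := by
    calc |Real.sin ((a - b) / 2)| ≤ |(a - b) / 2| := Real.abs_sin_le_abs
    _ = |a - b| / 2 := by rw [abs_div]; norm_num
  have h3 : (0:ℝ) ≤ |Real.sin ((a + b) / 2)| := abs_nonneg _
  have h4 : (0:ℝ) ≤ |Real.sin ((a - b) / 2)| := abs_nonneg _
  have h5 : (0:ℝ) ≤ |a + b| := abs_nonneg _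
  rw [abs_neg, abs_two]
  nlinarith

lemma key1 (x y : ℝ) : |Sfun x - Sfun y| ≤ |x ^ 2 - y ^ 2| / 16 := by
  have hx : Continuous fun t : ℝ => Real.cos (x * t) := by fun_prop
  have hy : Continuous fun t : ℝ => Real.cos (y * t) := by fun_prop
  have h : Sfun x - Sfun y = ∫ t in (0:ℝ)..(1/2), (Real.cos (x * t) - Real.cos (y * t)) := by
    rw [Sfun_integral, Sfun_integral,
      intervalIntegral.integral_sub (hx.intervalIntegrable _ _) (hy.intervalIntegrable _ _)]
  rw [h]
  have := intervalIntegral.norm_integral_le_of_norm_le_const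
    (C := |x ^ 2 - y ^ 2| / 8) (a := (0:ℝ)) (b := 1/2)
    (f := fun t => Real.cos (x * t) - Real.cos (y * t)) ?_
  · rw [Real.norm_eq_abs] at this
    calc |∫ t in (0:ℝ)..(1/2), (Real.cos (x * t) - Real.cos (y * t))|
        ≤ |x ^ 2 - y ^ 2| / 8 * |1/2 - 0| := this
      _ = |x ^ 2 - y ^ 2| / 16 := by rw [show |(1/2 - 0 : ℝ)| = 1/2 by norm_num]; ring
  · intro t ht
    rw [Set.uIoc_of_le (by norm_num)] at ht
    obtain ⟨ht0, ht1⟩ := ht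
    rw [Real.norm_eq_abs]
    calc |Real.cos (x * t) - Real.cos (y * t)|
        ≤ |x * t + y * t| * |x * t - y * t| / 2 := cos_diff_bound _ _
      _ = t ^ 2 * (|x + y| * |x - y|) / 2 := by
          rw [show x * t + y * t = (x + y) * t by ring, show x * t - y * t = (x - y) * t by ring,
            abs_mul, abs_mul, abs_of_pos ht0]
          ring
      _ = t ^ 2 * |x ^ 2 - y ^ 2| / 2 := by
          rw [← abs_mul]; ring_nf
      _ ≤ (1/2) ^ 2 * |x ^ 2 - y ^ 2| / 2 := by
          have h2 : t ^ 2 ≤ (1/2) ^ 2 := by nlinarith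
          have := abs_nonneg (x ^ 2 - y ^ 2)
          nlinarith
      _ = |x ^ 2 - y ^ 2| / 8 := by ring


lemma abs_Sfun_le (x : ℝ) : |Sfun x| ≤ 1 / 2 := by
  rcases eq_or_ne x 0 with h | h
  · rw [Sfun, if_pos h, abs_of_nonneg (by norm_num : (0:ℝ) ≤ 1/2)]
  · rw [Sfun, if_neg h, abs_div, div_le_iff₀ (abs_pos.mpr h)]
    calc |Real.sin (x / 2)| ≤ |x / 2| := Real.abs_sin_le_abs
      _ = 1 / 2 * |x| := by rw [abs_div, abs_two]; ring

lemma Sfun_abs (x : ℝ) : Sfun |x| = Sfun x := by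
  rcases abs_choice x with h | h
  · rw [h]
  · rw [h]
    rcases eq_or_ne x 0 with h0 | h0
    · simp [h0]
    · have hn : -x ≠ 0 := neg_ne_zero.mpr h0
      rw [Sfun, Sfun, if_neg hn, if_neg h0, show -x / 2 = -(x / 2) by ring, Real.sin_neg]
      field_simp

lemma sin_diff_bound (a b : ℝ) : |Real.sin a - Real.sin b| ≤ |a - b| := by
  rw [Real.sin_sub_sin, abs_mul, abs_mul, abs_two]
  have h1 : |Real.sin ((a - b) / 2)| ≤ |a - b| / 2 := by
    calc |Real.sin ((a - b) / 2)| ≤ |(a - b) / 2| := Real.abs_sin_le_abs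
      _ = |a - b| / 2 := by rw [abs_div, abs_two]
  have h2 : |Real.cos ((a + b) / 2)| ≤ 1 := Real.abs_cos_le_one _
  have h3 : (0:ℝ) ≤ |Real.sin ((a - b) / 2)| := abs_nonneg _
  nlinarith

/- Statement 16: there is `C` with
`|S x - S y| / |x² - y²| ≤ C min 1 (1/(x² + y²))` whenever `x² + y² > 0`, `|x| ≠ |y|`. -/
theorem stmt16 : ∃ C : ℝ, 0 < C ∧ ∀ x y : ℝ, 0 < x ^ 2 + y ^ 2 → |x| ≠ |y| →
    |Sfun x - Sfun y| / |x ^ 2 - y ^ 2| ≤ C * min 1 (1 / (x ^ 2 + y ^ 2)) := by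
  refine ⟨48, by norm_num, fun x y hs hxy => ?_⟩
  have hne : x ^ 2 - y ^ 2 ≠ 0 :=
    sub_ne_zero.mpr (fun h => hxy ((sq_eq_sq_iff_abs_eq_abs x y).mp h))
  have habs : (0:ℝ) < |x ^ 2 - y ^ 2| := abs_pos.mpr hne
  rcases le_total (x ^ 2 + y ^ 2) 1 with h1 | h1
  · rw [min_eq_left (one_le_one_div hs h1), div_le_iff₀ habs]
    calc |Sfun x - Sfun y| ≤ |x ^ 2 - y ^ 2| / 16 := key1 x y
      _ ≤ 48 * 1 * |x ^ 2 - y ^ 2| := by linarith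
  · rw [min_eq_right (by rw [div_le_one hs]; exact h1), div_le_iff₀ habs]
    set s := x ^ 2 + y ^ 2 with hsdef
    rcases le_or_gt (s / 2) |x ^ 2 - y ^ 2| with h2 | h2
    · have hb : |Sfun x - Sfun y| ≤ 1 := by
        calc |Sfun x - Sfun y| ≤ |Sfun x| + |Sfun y| := abs_sub _ _
          _ ≤ 1 := by have := abs_Sfun_le x; have := abs_Sfun_le y; linarith
      have hkey : (24:ℝ) ≤ 48 * (1 / s) * |x ^ 2 - y ^ 2| := by
        have h3 : 48 * (1 / s) * (s / 2) ≤ 48 * (1 / s) * |x ^ 2 - y ^ 2| := by gcongr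
        calc (24:ℝ) = 48 * (1 / s) * (s / 2) := by field_simp; norm_num
          _ ≤ _ := h3
      linarith
    · -- both x², y² comparable to s
      set a := |x| with hadef
      set b := |y| with hbdef
      have haa : a ^ 2 = x ^ 2 := sq_abs x
      have hbb : b ^ 2 = y ^ 2 := sq_abs y
      obtain ⟨h2l, h2r⟩ := abs_lt.mp h2
      have ha2 : s / 4 < a ^ 2 := by rw [haa]; simp only [hsdef] at *; linarith
      have hb2 : s / 4 < b ^ 2 := by rw [hbb]; simp only [hsdef] at *; linarith
      have ha : 0 < a := by nlinarith [abs_nonneg x]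
      have hb : 0 < b := by nlinarith [abs_nonneg y]
      have hab : s / 4 < a * b := by nlinarith [mul_pos ha hb]
      have hsum : a ^ 2 + b ^ 2 = s := by rw [haa, hbb]
      have hab1 : 1 ≤ a + b := by nlinarith [mul_pos ha hb]
      have hfac : |x ^ 2 - y ^ 2| = |a - b| * (a + b) := by
        rw [← haa, ← hbb, show a ^ 2 - b ^ 2 = (a - b) * (a + b) by ring, abs_mul,
          abs_of_pos (by linarith : (0:ℝ) < a + b)]
      clear_value a b s
      have expand : Sfun a - Sfun b =
          (Real.sin (a / 2) - Real.sin (b / 2)) / a + Real.sin (b / 2) * ((b - a) / (a * b)) := by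
        rw [Sfun, Sfun, if_neg ha.ne', if_neg hb.ne']
        field_simp
        ring
      have est : |Sfun a - Sfun b| ≤ |a - b| / 2 / a + |a - b| / (a * b) := by
        rw [expand]
        calc |(Real.sin (a / 2) - Real.sin (b / 2)) / a + Real.sin (b / 2) * ((b - a) / (a * b))|
            ≤ |(Real.sin (a / 2) - Real.sin (b / 2)) / a| +
              |Real.sin (b / 2) * ((b - a) / (a * b))| := abs_add_le _ _
          _ ≤ |a - b| / 2 / a + |a - b| / (a * b) := by
              gcongr ?_ + ?_
              · rw [abs_div, abs_of_pos ha]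
                gcongr
                calc |Real.sin (a / 2) - Real.sin (b / 2)| ≤ |a / 2 - b / 2| := sin_diff_bound _ _
                  _ = |a - b| / 2 := by rw [show a / 2 - b / 2 = (a - b) / 2 by ring, abs_div,
                      abs_two]
              · rw [abs_mul, abs_div, abs_of_pos (mul_pos ha hb)]
                calc |Real.sin (b / 2)| * (|b - a| / (a * b))
                    ≤ 1 * (|b - a| / (a * b)) := by
                      gcongr
                      exact abs_le.mpr ⟨Real.neg_one_le_sin _, Real.sin_le_one _⟩
                  _ = |a - b| / (a * b) := by rw [one_mul, abs_sub_comm]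
      have k1 : |a - b| / 2 / a ≤ |a - b| * (a + b) / s := by
        rw [div_div, div_le_div_iff₀ (by positivity) hs]
        have : s ≤ (2 * a) * (a + b) := by nlinarith
        calc |a - b| * s ≤ |a - b| * ((2 * a) * (a + b)) := by
              gcongr
          _ = |a - b| * (a + b) * (2 * a) := by ring
      have k2 : |a - b| / (a * b) ≤ 4 * (|a - b| * (a + b) / s) := by
        have hs4 : s ≤ 4 * (a * b) * (a + b) := by
          have h5 : 4 * (a * b) * 1 ≤ 4 * (a * b) * (a + b) := by
            have : (0:ℝ) ≤ 4 * (a * b) := by positivity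
            exact mul_le_mul_of_nonneg_left hab1 this
          linarith
        rw [show 4 * (|a - b| * (a + b) / s) = 4 * (|a - b| * (a + b)) / s by ring,
          div_le_div_iff₀ (mul_pos ha hb) hs]
        calc |a - b| * s ≤ |a - b| * (4 * (a * b) * (a + b)) := by gcongr
          _ = 4 * (|a - b| * (a + b)) * (a * b) := by ring
      have final : |Sfun x - Sfun y| ≤ 5 * (|a - b| * (a + b) / s) := by
        rw [← Sfun_abs x, ← Sfun_abs y, ← hadef, ← hbdef]
        calc |Sfun a - Sfun b| ≤ |a - b| / 2 / a + |a - b| / (a * b) := est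
          _ ≤ |a - b| * (a + b) / s + 4 * (|a - b| * (a + b) / s) := add_le_add k1 k2
          _ = 5 * (|a - b| * (a + b) / s) := by ring
      calc |Sfun x - Sfun y| ≤ 5 * (|a - b| * (a + b) / s) := final
        _ ≤ 48 * (|a - b| * (a + b) / s) := by
            have hq : 0 ≤ |a - b| * (a + b) / s := by positivity
            linarith
        _ = 48 * (1 / s) * |x ^ 2 - y ^ 2| := by rw [hfac]; ring
end
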